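/- arXiv:2306.04162 — 2 statements merged into one kernel-verified Lean document; each statement's English description precedes it below -/
import Mathlib

section
/- Let f : (0,∞) → ℝ be a continuously differentiable radial function such that ∫₀^∞ |f(r)|² sinh²(r) dr and ∫₀^∞ |f'(r)|² sinh²(r) dr are finite, and f(r) → 0 as r → ∞. Then for every r > 0, sinh²(r) · |f(r)|² ≤ 2 (∫₀^∞ |f(s)|² sinh²(s) ds)^{1/2} (∫₀^∞ |f'(s)|² sinh²(s) ds)^{1/2}. -/
open Real MeasureTheory Set

/-- Radial Sobolev pointwise estimate on ℍ³: for a radial C¹ function `f` with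
finite weighted L² norms of `f` and `f'` (weight `sinh² r`), decaying at infinity,
`sinh²(r) |f(r)|² ≤ 2 ‖f‖ ‖f'‖`. -/
theorem stmt0 (f f' : ℝ → ℝ)
    (hderiv : ∀ r ∈ Ioi (0 : ℝ), HasDerivAt f (f' r) r)
    (hf'cont : ContinuousOn f' (Ioi 0))
    (hf2 : IntegrableOn (fun s => (f s) ^ 2 * Real.sinh s ^ 2) (Ioi 0))
    (hf'2 : IntegrableOn (fun s => (f' s) ^ 2 * Real.sinh s ^ 2) (Ioi 0))
    (hdecay : Filter.Tendsto f Filter.atTop (nhds 0)) :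
    ∀ r ∈ Ioi (0 : ℝ),
      Real.sinh r ^ 2 * (f r) ^ 2 ≤
        2 * Real.sqrt (∫ s in Ioi (0 : ℝ), (f s) ^ 2 * Real.sinh s ^ 2) *
          Real.sqrt (∫ s in Ioi (0 : ℝ), (f' s) ^ 2 * Real.sinh s ^ 2) := by
  intro r hr
  rw [mem_Ioi] at hr
  have hsr : 0 < Real.sinh r := Real.sinh_pos_iff.2 hr
  have hfc : ContinuousOn f (Ioi 0) := fun x hx =>
    (hderiv x hx).continuousAt.continuousWithinAt
  have hmeasf : AEStronglyMeasurable f (volume.restrict (Ioi (0:ℝ))) :=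
    hfc.aestronglyMeasurable measurableSet_Ioi
  have hmeasf' : AEStronglyMeasurable f' (volume.restrict (Ioi (0:ℝ))) :=
    hf'cont.aestronglyMeasurable measurableSet_Ioi
  have hmeassinh : AEStronglyMeasurable Real.sinh (volume.restrict (Ioi (0:ℝ))) :=
    Real.continuous_sinh.aestronglyMeasurable
  -- the dominating function
  have hdom : IntegrableOn (fun s => (f s ^ 2 + f' s ^ 2) * Real.sinh s ^ 2) (Ioi 0) := by
    have := hf2.add hf'2
    simpa [add_mul, Pi.add_def] using this
  -- integrability of 2|f||f'| sinh² on Ioi 0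
  have hkey : IntegrableOn (fun s => 2 * |f s| * |f' s| * Real.sinh s ^ 2) (Ioi 0) := by
    refine Integrable.mono' hdom ?_ ?_
    · exact ((((continuous_abs.comp_aestronglyMeasurable hmeasf).const_mul 2).mul (continuous_abs.comp_aestronglyMeasurable hmeasf')).mul (hmeassinh.pow 2))
    · refine Filter.Eventually.of_forall fun s => ?_
      have h1 : 2 * |f s| * |f' s| ≤ f s ^ 2 + f' s ^ 2 := by
        nlinarith [sq_nonneg (|f s| - |f' s|), sq_abs (f s), sq_abs (f' s)]
      have h2 : (0:ℝ) ≤ Real.sinh s ^ 2 := sq_nonneg _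
      have h3 : (0:ℝ) ≤ 2 * |f s| * |f' s| * Real.sinh s ^ 2 := by positivity
      rw [Real.norm_of_nonneg h3]
      exact mul_le_mul_of_nonneg_right h1 h2
  have hkeyr : IntegrableOn (fun s => 2 * |f s| * |f' s| * Real.sinh s ^ 2) (Ioi r) :=
    hkey.mono_set (Ioi_subset_Ioi hr.le)
  -- integrability of 2 f f' on Ioi r
  have hint2ff' : IntegrableOn (fun s => 2 * f s * f' s) (Ioi r) := by
    refine Integrable.mono' (hkeyr.const_mul ((Real.sinh r ^ 2)⁻¹)) ?_ ?_
    · exact (((hmeasf.const_mul 2).mul hmeasf').mono_measure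
        (Measure.restrict_mono (Ioi_subset_Ioi hr.le) le_rfl))
    · filter_upwards [ae_restrict_mem measurableSet_Ioi] with s hs
      rw [mem_Ioi] at hs
      have hss : Real.sinh r ≤ Real.sinh s := Real.sinh_le_sinh.2 hs.le
      have h2 : Real.sinh r ^ 2 ≤ Real.sinh s ^ 2 := by nlinarith
      have : ‖2 * f s * f' s‖ = 2 * |f s| * |f' s| := by
        rw [Real.norm_eq_abs, abs_mul, abs_mul, abs_two]
      rw [this, inv_mul_eq_div, le_div_iff₀ (by positivity : (0:ℝ) < Real.sinh r ^ 2)]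
      have hnn : (0:ℝ) ≤ 2 * |f s| * |f' s| := by positivity
      nlinarith [mul_le_mul_of_nonneg_left h2 hnn]
  -- FTC on [r, ∞) for f²
  have hFTC : (∫ s in Ioi r, 2 * f s * f' s) = 0 - f r ^ 2 := by
    have hd : ∀ x ∈ Ici r, HasDerivAt (fun s => f s ^ 2) (2 * f x * f' x) x := by
      intro x hx
      have hx0 : x ∈ Ioi (0:ℝ) := lt_of_lt_of_le hr hx
      have := (hderiv x hx0).fun_pow 2
      simpa [mul_comm, mul_assoc, mul_left_comm] using this
    have htend : Filter.Tendsto (fun s => f s ^ 2) Filter.atTop (nhds 0) := by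
      have := hdecay.pow 2
      simpa using this
    exact integral_Ioi_of_hasDerivAt_of_tendsto' hd hint2ff' htend
  have hfr2 : f r ^ 2 = ∫ s in Ioi r, -(2 * f s * f' s) := by
    rw [integral_neg, hFTC]; ring
  -- main chain of inequalities
  have step1 : Real.sinh r ^ 2 * f r ^ 2
      ≤ ∫ s in Ioi r, 2 * |f s| * |f' s| * Real.sinh s ^ 2 := by
    rw [hfr2, ← integral_const_mul]
    refine setIntegral_mono_on ?_ hkeyr measurableSet_Ioi ?_
    · exact hint2ff'.neg.const_mul _
    · intro s hs
      rw [mem_Ioi] at hs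
      have hss : Real.sinh r ≤ Real.sinh s := Real.sinh_le_sinh.2 hs.le
      have hab : -(f s * f' s) ≤ |f s| * |f' s| := by
        rw [← abs_mul]; exact neg_le_abs _
      have h2 : Real.sinh r ^ 2 ≤ Real.sinh s ^ 2 := by nlinarith
      nlinarith [hab, h2, sq_nonneg (Real.sinh r),
        mul_nonneg (abs_nonneg (f s)) (abs_nonneg (f' s))]
  have step2 : (∫ s in Ioi r, 2 * |f s| * |f' s| * Real.sinh s ^ 2)
      ≤ ∫ s in Ioi (0:ℝ), 2 * |f s| * |f' s| * Real.sinh s ^ 2 := by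
    refine setIntegral_mono_set hkey ?_ (HasSubset.Subset.eventuallyLE (Ioi_subset_Ioi hr.le))
    exact Filter.Eventually.of_forall fun s => by positivity
  -- Cauchy–Schwarz
  have hconj : Real.HolderConjugate 2 2 := Real.HolderConjugate.two_two
  have hmem1 : MemLp (fun s => |f s| * Real.sinh s) 2 (volume.restrict (Ioi (0:ℝ))) := by
    refine (memLp_two_iff_integrable_sq ((continuous_abs.comp_aestronglyMeasurable hmeasf).mul hmeassinh)).2 ?_
    simpa only [Pi.mul_apply, mul_pow, sq_abs, IntegrableOn] using hf2
  have hmem2 : MemLp (fun s => |f' s| * Real.sinh s) 2 (volume.restrict (Ioi (0:ℝ))) := by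
    refine (memLp_two_iff_integrable_sq ((continuous_abs.comp_aestronglyMeasurable hmeasf').mul hmeassinh)).2 ?_
    simpa only [Pi.mul_apply, mul_pow, sq_abs, IntegrableOn] using hf'2
  have hCS : (∫ s in Ioi (0:ℝ), (|f s| * Real.sinh s) * (|f' s| * Real.sinh s))
      ≤ (∫ s in Ioi (0:ℝ), (|f s| * Real.sinh s) ^ (2:ℝ)) ^ (1/(2:ℝ)) *
        (∫ s in Ioi (0:ℝ), (|f' s| * Real.sinh s) ^ (2:ℝ)) ^ (1/(2:ℝ)) := by
    refine integral_mul_le_Lp_mul_Lq_of_nonneg hconj ?_ ?_ ?_ ?_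
    · filter_upwards [ae_restrict_mem measurableSet_Ioi] with s hs
      have : 0 ≤ Real.sinh s := (Real.sinh_pos_iff.2 hs).le
      positivity
    · filter_upwards [ae_restrict_mem measurableSet_Ioi] with s hs
      have : 0 ≤ Real.sinh s := (Real.sinh_pos_iff.2 hs).le
      positivity
    · simpa [ENNReal.ofReal_ofNat] using hmem1
    · simpa [ENNReal.ofReal_ofNat] using hmem2
  have hA : (∫ s in Ioi (0:ℝ), (|f s| * Real.sinh s) ^ (2:ℝ))
      = ∫ s in Ioi (0:ℝ), f s ^ 2 * Real.sinh s ^ 2 := by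
    refine setIntegral_congr_fun measurableSet_Ioi fun s hs => ?_
    have h0 : 0 ≤ Real.sinh s := (Real.sinh_pos_iff.2 hs).le
    rw [show ((2:ℝ)) = ((2:ℕ):ℝ) by norm_num, Real.rpow_natCast, mul_pow, sq_abs]
  have hB : (∫ s in Ioi (0:ℝ), (|f' s| * Real.sinh s) ^ (2:ℝ))
      = ∫ s in Ioi (0:ℝ), f' s ^ 2 * Real.sinh s ^ 2 := by
    refine setIntegral_congr_fun measurableSet_Ioi fun s hs => ?_
    rw [show ((2:ℝ)) = ((2:ℕ):ℝ) by norm_num, Real.rpow_natCast, mul_pow, sq_abs]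
  have step3 : (∫ s in Ioi (0:ℝ), 2 * |f s| * |f' s| * Real.sinh s ^ 2)
      ≤ 2 * Real.sqrt (∫ s in Ioi (0:ℝ), f s ^ 2 * Real.sinh s ^ 2) *
        Real.sqrt (∫ s in Ioi (0:ℝ), f' s ^ 2 * Real.sinh s ^ 2) := by
    have heq : (∫ s in Ioi (0:ℝ), 2 * |f s| * |f' s| * Real.sinh s ^ 2)
        = 2 * ∫ s in Ioi (0:ℝ), (|f s| * Real.sinh s) * (|f' s| * Real.sinh s) := by
      rw [← integral_const_mul]
      refine setIntegral_congr_fun measurableSet_Ioi fun s hs => ?_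
      ring
    rw [heq]
    rw [hA, hB] at hCS
    rw [Real.sqrt_eq_rpow, Real.sqrt_eq_rpow, mul_assoc]
    exact mul_le_mul_of_nonneg_left hCS (by norm_num)
  calc Real.sinh r ^ 2 * f r ^ 2 ≤ _ := step1
    _ ≤ _ := step2
    _ ≤ _ := step3
end

section
/- Let φ(r) = 1/r for 0 < r < 1 and φ(r) = 1 for r ≥ 1, and define b(r) = (1/sinh²(r)) ∫₀^r sinh²(s) φ(s) ds for r > 0 (the radial derivative of the solution a₂ of Δ a₂ = φ on ℍ³). Then b'(r) = φ(r) − (2 cosh r / sinh r) b(r), and there exists c > 0 such that −c·r ≤ b'(r) for all 0 < r ≤ 1 and b'(r) ∼ −r as r → 0⁺ (i.e. b'(r)/r converges to a negative constant as r → 0⁺). -/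
open Real Set Filter intervalIntegral

lemma nonneg_of_deriv (f f' : ℝ → ℝ) (hd : ∀ x, HasDerivAt f (f' x) x)
    (h0 : f 0 = 0) (hf' : ∀ x, 0 ≤ x → 0 ≤ f' x) {x : ℝ} (hx : 0 ≤ x) : 0 ≤ f x := by
  have hm : MonotoneOn f (Ici 0) := by
    refine monotoneOn_of_deriv_nonneg (convex_Ici 0)
      ((continuous_iff_continuousAt.2 fun y => (hd y).continuousAt).continuousOn)
      (fun y _ => (hd y).differentiableAt.differentiableWithinAt) (fun y hy => ?_)
    rw [interior_Ici, mem_Ioi] at hy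
    rw [(hd y).deriv]
    exact hf' y hy.le
  have := hm (self_mem_Ici) hx hx
  rwa [h0] at this

lemma cosh_ge_quad {x : ℝ} (hx : 0 ≤ x) : 1 + x^2/2 ≤ Real.cosh x := by
  have h := nonneg_of_deriv (fun x => Real.cosh x - 1 - x^2/2) (fun x => Real.sinh x - x)
    (fun x => by
      have := ((Real.hasDerivAt_cosh x).sub_const 1).sub ((hasDerivAt_pow 2 x).div_const 2)
      convert this using 1
      · rfl
      · rfl
      · rfl
      simp)
    (by norm_num) (fun x hx => by simpa using hx) hx
  linarith

lemma sinh_ge_cubic {x : ℝ} (hx : 0 ≤ x) : x + x^3/6 ≤ Real.sinh x := by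
  have h := nonneg_of_deriv (fun x => Real.sinh x - x - x^3/6) (fun x => Real.cosh x - 1 - x^2/2)
    (fun x => by
      have := (((Real.hasDerivAt_sinh x).sub (hasDerivAt_id x)).sub ((hasDerivAt_pow 3 x).div_const 6))
      convert this using 1
      · rfl
      · rfl
      · rfl
      simp; ring)
    (by norm_num) (fun x hx => by have := cosh_ge_quad hx; linarith) hx
  linarith

lemma sinh_le_mul_cosh {x : ℝ} (hx : 0 ≤ x) : Real.sinh x ≤ x * Real.cosh x := by
  have h := nonneg_of_deriv (fun x => x * Real.cosh x - Real.sinh x)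
    (fun x => x * Real.sinh x)
    (fun x => by
      have := ((hasDerivAt_id x).mul (Real.hasDerivAt_cosh x)).sub (Real.hasDerivAt_sinh x)
      convert this using 1
      · rfl
      · rfl
      · rfl
      simp)
    (by norm_num) (fun x hx => mul_nonneg hx (Real.sinh_nonneg_iff.2 hx)) hx
  linarith

lemma cosh_le_aux {x : ℝ} (hx : 0 ≤ x) : Real.cosh x - 1 ≤ x^2/2 * Real.cosh x := by
  have h := nonneg_of_deriv (fun x => x^2/2 * Real.cosh x - (Real.cosh x - 1))
    (fun x => (x * Real.cosh x - Real.sinh x) + x^2/2 * Real.sinh x)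
    (fun x => by
      have := (((hasDerivAt_pow 2 x).div_const 2).mul (Real.hasDerivAt_cosh x)).sub
        ((Real.hasDerivAt_cosh x).sub_const 1)
      convert this using 1
      · rfl
      · rfl
      · rfl
      simp; ring)
    (by norm_num)
    (fun x hx => by
      have h1 := sinh_le_mul_cosh hx
      have h2 : 0 ≤ x^2/2 * Real.sinh x := mul_nonneg (by positivity) (Real.sinh_nonneg_iff.2 hx)
      linarith) hx
  linarith

lemma sinh_le_aux {x : ℝ} (hx : 0 ≤ x) : Real.sinh x ≤ x + x^3/6 * Real.cosh x := by
  have h := nonneg_of_deriv (fun x => x + x^3/6 * Real.cosh x - Real.sinh x)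
    (fun x => (x^2/2 * Real.cosh x - (Real.cosh x - 1)) + x^3/6 * Real.sinh x)
    (fun x => by
      have := ((hasDerivAt_id x).add
        (((hasDerivAt_pow 3 x).div_const 6).mul (Real.hasDerivAt_cosh x))).sub (Real.hasDerivAt_sinh x)
      convert this using 1
      · rfl
      · rfl
      · rfl
      simp; ring)
    (by norm_num)
    (fun x hx => by
      have h1 := cosh_le_aux hx
      have h2 : 0 ≤ x^3/6 * Real.sinh x := mul_nonneg (by positivity) (Real.sinh_nonneg_iff.2 hx)
      linarith) hx
  linarith

lemma cosh_le_two {x : ℝ} (hx : 0 ≤ x) (hx1 : x ≤ 1) : Real.cosh x ≤ 2 := by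
  have h := cosh_le_aux hx
  have hx2 : x^2 ≤ 1 := by nlinarith
  nlinarith [Real.cosh_pos x, mul_le_mul_of_nonneg_left hx2 (le_of_lt (Real.cosh_pos x))]

lemma cosh_le_one_add_sq {x : ℝ} (hx : 0 ≤ x) (hx1 : x ≤ 1) : Real.cosh x ≤ 1 + x^2 := by
  have h := cosh_le_aux hx
  have h2 := cosh_le_two hx hx1
  nlinarith

lemma sinh_le_poly {x : ℝ} (hx : 0 ≤ x) (hx1 : x ≤ 1) : Real.sinh x ≤ x + x^3/6 + x^5/6 := by
  have h := sinh_le_aux hx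
  have h2 := cosh_le_one_add_sq hx hx1
  have h3 : 0 ≤ x^3/6 := by positivity
  nlinarith

noncomputable def hfun : ℝ → ℝ := fun s => Real.sinh s ^ 2 * max (1 / s) 1

lemma hfun_eq {s : ℝ} (hs : 0 < s) (hs1 : s ≤ 1) : hfun s = Real.sinh s ^ 2 / s := by
  have : (1:ℝ) ≤ 1 / s := by rw [le_div_iff₀ hs]; linarith
  rw [hfun, max_eq_left this]
  ring

lemma hfun_eq' {s : ℝ} (hs : 1 ≤ s) : hfun s = Real.sinh s ^ 2 := by
  have h0 : (0:ℝ) < s := lt_of_lt_of_le one_pos hs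
  have : 1 / s ≤ 1 := by rw [div_le_one h0]; exact hs
  rw [hfun, max_eq_right this, mul_one]

lemma hfun_meas : Measurable hfun :=
  ((Real.measurable_sinh.pow_const 2).mul ((measurable_const.div measurable_id).max measurable_const))

lemma hfun_nonneg {s : ℝ} (hs : 0 ≤ s) : 0 ≤ hfun s := by
  apply mul_nonneg (sq_nonneg _)
  exact le_trans zero_le_one (le_max_right _ _)

lemma hfun_cont {r : ℝ} (hr : 0 < r) : ContinuousAt hfun r := by
  apply ContinuousAt.mul
  · exact (Real.continuous_sinh.continuousAt).pow 2
  · exact (ContinuousAt.div continuousAt_const continuousAt_id hr.ne').max continuousAt_const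

lemma hfun_bound {r s : ℝ} (hs : s ∈ Ioc 0 r) :
    hfun s ≤ Real.sinh r * Real.cosh r + Real.sinh r ^ 2 := by
  obtain ⟨hs0, hsr⟩ := hs
  have hr0 : 0 < r := lt_of_lt_of_le hs0 hsr
  have h1 : max (1/s) 1 ≤ 1/s + 1 :=
    max_le (by linarith [one_div_nonneg.2 hs0.le]) (by linarith [one_div_nonneg.2 hs0.le])
  have h2 : hfun s ≤ Real.sinh s ^2 / s + Real.sinh s ^2 := by
    rw [hfun]
    calc Real.sinh s ^2 * max (1/s) 1 ≤ Real.sinh s ^2 * (1/s + 1) :=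
          mul_le_mul_of_nonneg_left h1 (sq_nonneg _)
      _ = Real.sinh s ^2/s + Real.sinh s ^2 := by ring
  have hsin : 0 < Real.sinh s := Real.sinh_pos_iff.2 hs0
  have h3 : Real.sinh s ^2 / s ≤ Real.sinh s * Real.cosh s := by
    rw [div_le_iff₀ hs0]
    have := sinh_le_mul_cosh hs0.le
    nlinarith [Real.cosh_pos s]
  have hmono : Real.sinh s ≤ Real.sinh r := Real.sinh_le_sinh.2 hsr
  have hcmono : Real.cosh s ≤ Real.cosh r := by
    rw [Real.cosh_le_cosh, abs_of_pos hs0, abs_of_pos hr0]; exact hsr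
  have h4 : Real.sinh s * Real.cosh s ≤ Real.sinh r * Real.cosh r := by
    apply mul_le_mul hmono hcmono (Real.cosh_pos s).le (Real.sinh_pos_iff.2 hr0).le
  have h5 : Real.sinh s ^2 ≤ Real.sinh r ^2 := by nlinarith
  linarith

lemma hfun_intInt {r : ℝ} (hr : 0 < r) : IntervalIntegrable hfun MeasureTheory.volume 0 r := by
  rw [intervalIntegrable_iff, uIoc_of_le hr.le]
  apply MeasureTheory.Integrable.mono' (g := fun _ => Real.sinh r * Real.cosh r + Real.sinh r ^2)
  · exact MeasureTheory.integrableOn_const measure_Ioc_lt_top.ne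
  · exact hfun_meas.aestronglyMeasurable.restrict
  · filter_upwards [MeasureTheory.ae_restrict_mem measurableSet_Ioc] with s hs
    rw [Real.norm_eq_abs, abs_of_nonneg (hfun_nonneg hs.1.le)]
    exact hfun_bound hs

noncomputable def Ffun : ℝ → ℝ := fun r => ∫ s in (0:ℝ)..r, hfun s

lemma Ffun_hasDeriv {r : ℝ} (hr : 0 < r) : HasDerivAt Ffun (hfun r) r :=
  intervalIntegral.integral_hasDerivAt_right (hfun_intInt hr)
    hfun_meas.stronglyMeasurable.stronglyMeasurableAtFilter (hfun_cont hr)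

lemma Ffun_nonneg {r : ℝ} (hr : 0 < r) : 0 ≤ Ffun r := by
  apply intervalIntegral.integral_nonneg hr.le
  intro s hs
  exact hfun_nonneg hs.1

lemma poly_int (r : ℝ) :
    (∫ s in (0:ℝ)..r, (s + s^3/3)) = r^2/2 + r^4/12 := by
  have h1 : IntervalIntegrable (fun s : ℝ => s) MeasureTheory.volume 0 r :=
    (continuous_id).intervalIntegrable 0 r
  have h2 : IntervalIntegrable (fun s : ℝ => s^3/3) MeasureTheory.volume 0 r :=
    ((continuous_pow 3).div_const 3).intervalIntegrable 0 r
  rw [intervalIntegral.integral_add h1 h2]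
  simp [intervalIntegral.integral_div, integral_pow]
  norm_num
  ring

lemma poly_int2 (r : ℝ) :
    (∫ s in (0:ℝ)..r, (s + s^3/3 + s^5)) = r^2/2 + r^4/12 + r^6/6 := by
  have h1 : IntervalIntegrable (fun s : ℝ => s + s^3/3) MeasureTheory.volume 0 r :=
    (continuous_id.add ((continuous_pow 3).div_const 3)).intervalIntegrable 0 r
  have h2 : IntervalIntegrable (fun s : ℝ => s^5) MeasureTheory.volume 0 r :=
    (continuous_pow 5).intervalIntegrable 0 r
  rw [intervalIntegral.integral_add h1 h2, poly_int]
  simp [integral_pow]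
  ring

lemma hfun_lb {s : ℝ} (hs : 0 ≤ s) (hs1 : s ≤ 1) : s + s^3/3 ≤ hfun s := by
  rcases eq_or_lt_of_le hs with h | h
  · simp [← h, hfun]
  · rw [hfun_eq h hs1, le_div_iff₀ h]
    have hg := sinh_ge_cubic hs
    have h0 : (0:ℝ) ≤ s + s^3/6 := by positivity
    have h2 : (s + s^3/6) * (s + s^3/6) ≤ Real.sinh s * Real.sinh s :=
      mul_le_mul hg hg h0 (Real.sinh_nonneg_iff.2 hs)
    nlinarith [sq_nonneg (s^3)]

lemma hfun_ub {s : ℝ} (hs : 0 ≤ s) (hs1 : s ≤ 1) : hfun s ≤ s + s^3/3 + s^5 := by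
  rcases eq_or_lt_of_le hs with h | h
  · simp [← h, hfun]
  · rw [hfun_eq h hs1, div_le_iff₀ h]
    have h1 := sinh_le_poly hs hs1
    have h2 : 0 < Real.sinh s := Real.sinh_pos_iff.2 h
    have hu : (0:ℝ) ≤ s + s^3/6 + s^5/6 := by positivity
    have h3 : Real.sinh s * Real.sinh s ≤ (s + s^3/6 + s^5/6) * (s + s^3/6 + s^5/6) :=
      mul_le_mul h1 h1 h2.le hu
    have h4 : s^10 ≤ s^6 := pow_le_pow_of_le_one hs hs1 (by norm_num)
    have h5 : s^8 ≤ s^6 := pow_le_pow_of_le_one hs hs1 (by norm_num)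
    nlinarith

lemma Ffun_lb {r : ℝ} (hr : 0 < r) (hr1 : r ≤ 1) : r^2/2 + r^4/12 ≤ Ffun r := by
  rw [← poly_int r]
  apply intervalIntegral.integral_mono_on hr.le
    ((continuous_id.add ((continuous_pow 3).div_const 3)).intervalIntegrable 0 r)
    (hfun_intInt hr)
  intro s hs
  exact hfun_lb hs.1 (le_trans hs.2 hr1)

lemma Ffun_ub {r : ℝ} (hr : 0 < r) (hr1 : r ≤ 1) : Ffun r ≤ r^2/2 + r^4/12 + r^6/6 := by
  rw [← poly_int2 r]
  apply intervalIntegral.integral_mono_on hr.le (hfun_intInt hr)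
    (((continuous_id.add ((continuous_pow 3).div_const 3)).add (continuous_pow 5)).intervalIntegrable 0 r)
  intro s hs
  exact hfun_ub hs.1 (le_trans hs.2 hr1)

lemma T1 : Tendsto (fun r => Real.sinh r / r) (nhdsWithin (0:ℝ) (Ioi 0)) (nhds 1) := by
  apply HasDerivAt.lhopital_zero_nhdsGT (f' := Real.cosh) (g' := fun _ => (1:ℝ))
  · exact Eventually.of_forall fun x => Real.hasDerivAt_sinh x
  · exact Eventually.of_forall fun x => hasDerivAt_id x
  · exact Eventually.of_forall fun x => one_ne_zero
  · have : Tendsto Real.sinh (nhdsWithin (0:ℝ) (Ioi 0)) (nhds (Real.sinh 0)) :=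
      (Real.continuous_sinh.tendsto 0).mono_left nhdsWithin_le_nhds
    simpa using this
  · exact tendsto_nhdsWithin_of_tendsto_nhds tendsto_id
  · have : Tendsto Real.cosh (nhdsWithin (0:ℝ) (Ioi 0)) (nhds (Real.cosh 0)) :=
      (Real.continuous_cosh.tendsto 0).mono_left nhdsWithin_le_nhds
    simp only [Real.cosh_zero] at this
    simpa using this

lemma T2 : Tendsto (fun r => (Real.cosh r - 1) / r^2) (nhdsWithin (0:ℝ) (Ioi 0)) (nhds (1/2)) := by
  apply HasDerivAt.lhopital_zero_nhdsGT (f' := Real.sinh) (g' := fun x => 2*x)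
  · exact Eventually.of_forall fun x => (Real.hasDerivAt_cosh x).sub_const 1
  · exact Eventually.of_forall fun x => by simpa using (hasDerivAt_pow 2 x)
  · filter_upwards [self_mem_nhdsWithin] with x hx
    exact mul_ne_zero two_ne_zero (ne_of_gt hx)
  · have : Tendsto (fun r => Real.cosh r - 1) (nhdsWithin (0:ℝ) (Ioi 0)) (nhds (Real.cosh 0 - 1)) :=
      ((Real.continuous_cosh.sub continuous_const).tendsto 0).mono_left nhdsWithin_le_nhds
    simpa using this
  · have : Tendsto (fun r : ℝ => r^2) (nhdsWithin (0:ℝ) (Ioi 0)) (nhds ((0:ℝ)^2)) :=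
      ((continuous_pow 2).tendsto 0).mono_left nhdsWithin_le_nhds
    simpa using this
  · have : Tendsto (fun r => Real.sinh r / r / 2) (nhdsWithin (0:ℝ) (Ioi 0)) (nhds (1/2)) :=
      T1.div_const 2
    apply this.congr
    intro x; rw [div_div]; ring_nf

lemma T3 : Tendsto (fun r => (Real.sinh r - r) / r^3) (nhdsWithin (0:ℝ) (Ioi 0)) (nhds (1/6)) := by
  apply HasDerivAt.lhopital_zero_nhdsGT (f' := fun x => Real.cosh x - 1) (g' := fun x => 3*x^2)
  · exact Eventually.of_forall fun x => (Real.hasDerivAt_sinh x).sub (hasDerivAt_id x)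
  · exact Eventually.of_forall fun x => by simpa using (hasDerivAt_pow 3 x)
  · filter_upwards [self_mem_nhdsWithin] with x hx
    exact mul_ne_zero three_ne_zero (pow_ne_zero 2 (ne_of_gt hx))
  · have : Tendsto (fun r => Real.sinh r - r) (nhdsWithin (0:ℝ) (Ioi 0)) (nhds (Real.sinh 0 - 0)) :=
      ((Real.continuous_sinh.sub continuous_id).tendsto 0).mono_left nhdsWithin_le_nhds
    simpa using this
  · have : Tendsto (fun r : ℝ => r^3) (nhdsWithin (0:ℝ) (Ioi 0)) (nhds ((0:ℝ)^3)) :=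
      ((continuous_pow 3).tendsto 0).mono_left nhdsWithin_le_nhds
    simpa using this
  · have : Tendsto (fun r => (Real.cosh r - 1) / r^2 / 3) (nhdsWithin (0:ℝ) (Ioi 0)) (nhds (1/2/3)) :=
      T2.div_const 3
    norm_num at this
    apply this.congr
    intro x; rw [div_div]; ring_nf

lemma Tcosh : Tendsto Real.cosh (nhdsWithin (0:ℝ) (Ioi 0)) (nhds 1) := by
  have : Tendsto Real.cosh (nhdsWithin (0:ℝ) (Ioi 0)) (nhds (Real.cosh 0)) :=
    (Real.continuous_cosh.tendsto 0).mono_left nhdsWithin_le_nhds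
  simpa using this

lemma Tsq : Tendsto (fun r : ℝ => r^2) (nhdsWithin (0:ℝ) (Ioi 0)) (nhds 0) := by
  have : Tendsto (fun r : ℝ => r^2) (nhdsWithin (0:ℝ) (Ioi 0)) (nhds ((0:ℝ)^2)) :=
    ((continuous_pow 2).tendsto 0).mono_left nhdsWithin_le_nhds
  simpa using this

noncomputable def Aup : ℝ → ℝ :=
  fun r => 1/r^2 - 2*Real.cosh r*(r^2/2 + r^4/12)/(r * Real.sinh r^3)
noncomputable def Alo : ℝ → ℝ :=
  fun r => 1/r^2 - 2*Real.cosh r*(r^2/2 + r^4/12 + r^6/6)/(r * Real.sinh r^3)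

lemma Aup_tendsto : Tendsto Aup (nhdsWithin (0:ℝ) (Ioi 0)) (nhds (-(1/6))) := by
  have hnum : Tendsto (fun r => 6*((Real.sinh r - r)/r^3)*((Real.sinh r/r)^2 + (Real.sinh r/r) + 1)
      - 6*((Real.cosh r - 1)/r^2) - Real.cosh r) (nhdsWithin (0:ℝ) (Ioi 0))
      (nhds (6*(1/6)*((1:ℝ)^2 + 1 + 1) - 6*(1/2) - 1)) :=
    (((T3.const_mul 6).mul (((T1.pow 2).add T1).add tendsto_const_nhds)).sub
      (T2.const_mul 6)).sub Tcosh
  have hden : Tendsto (fun r => 6*(Real.sinh r/r)^3) (nhdsWithin (0:ℝ) (Ioi 0))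
      (nhds (6*(1:ℝ)^3)) := (T1.pow 3).const_mul 6
  have hG := hnum.div hden (by norm_num)
  norm_num at hG
  apply Tendsto.congr' _ hG
  filter_upwards [self_mem_nhdsWithin] with r hr
  have h1 : (r:ℝ) ≠ 0 := (ne_of_gt hr)
  have h2 : Real.sinh r ≠ 0 := Real.sinh_ne_zero.2 h1
  show _ = Aup r
  rw [Aup, Pi.div_apply]
  field_simp
  ring

lemma Alo_tendsto : Tendsto Alo (nhdsWithin (0:ℝ) (Ioi 0)) (nhds (-(1/6))) := by
  have hextra : Tendsto (fun r => Real.cosh r * r^2/(3*(Real.sinh r/r)^3))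
      (nhdsWithin (0:ℝ) (Ioi 0)) (nhds ((1*0)/(3*(1:ℝ)^3))) :=
    (Tcosh.mul Tsq).div ((T1.pow 3).const_mul 3) (by norm_num)
  norm_num at hextra
  have := Aup_tendsto.sub hextra
  norm_num at this ⊢
  apply Tendsto.congr' _ this
  filter_upwards [self_mem_nhdsWithin] with r hr
  have h1 : (r:ℝ) ≠ 0 := (ne_of_gt hr)
  have h2 : Real.sinh r ≠ 0 := Real.sinh_ne_zero.2 h1
  show Aup r - _ = Alo r
  rw [Aup, Alo]
  field_simp
  ring

lemma int_eq (φ : ℝ → ℝ) (hφ : ∀ r : ℝ, 0 < r → φ r = if r < 1 then 1 / r else 1)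
    {u : ℝ} (hu : 0 < u) :
    (∫ s in (0:ℝ)..u, Real.sinh s ^ 2 * φ s) = Ffun u := by
  rw [Ffun]
  apply intervalIntegral.integral_congr
  intro s hs
  rw [uIcc_of_le hu.le] at hs
  show Real.sinh s ^ 2 * φ s = hfun s
  rcases eq_or_lt_of_le hs.1 with h | h
  · simp [← h, hfun]
  · rw [hφ s h]
    by_cases h1 : s < 1
    · rw [if_pos h1, hfun_eq h h1.le]
      ring
    · rw [if_neg h1, hfun_eq' (not_lt.1 h1), mul_one]

lemma hfun_phi (φ : ℝ → ℝ) (hφ : ∀ r : ℝ, 0 < r → φ r = if r < 1 then 1 / r else 1)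
    {r : ℝ} (hr : 0 < r) : hfun r = Real.sinh r ^ 2 * φ r := by
  rw [hφ r hr]
  by_cases h1 : r < 1
  · rw [if_pos h1, hfun_eq hr h1.le]; ring
  · rw [if_neg h1, hfun_eq' (not_lt.1 h1), mul_one]

/-- For `φ(r) = 1/r` on `(0,1)`, `φ(r) = 1` on `[1,∞)`, the radial derivative
`b(r) = sinh⁻²(r) ∫₀ʳ sinh²(s) φ(s) ds` of the weight `a₂` solving `Δa₂ = φ`
satisfies `b' = φ − (2 cosh/sinh) b`; near the origin `b'(r) ∼ −r`
(so `b'` is only `O(r)`-negative there). -/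
theorem stmt3
    (φ : ℝ → ℝ)
    (hφ : ∀ r : ℝ, 0 < r → φ r = if r < 1 then 1 / r else 1)
    (b : ℝ → ℝ)
    (hb : ∀ r ∈ Ioi (0 : ℝ),
      b r = (1 / Real.sinh r ^ 2) * ∫ s in (0 : ℝ)..r, Real.sinh s ^ 2 * φ s) :
    (∀ r ∈ Ioi (0 : ℝ),
      HasDerivAt b (φ r - (2 * Real.cosh r / Real.sinh r) * b r) r) ∧
    (∃ c : ℝ, 0 < c ∧ ∀ r ∈ Ioc (0 : ℝ) 1, -c * r ≤ deriv b r) ∧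
    (∃ L : ℝ, L < 0 ∧
      Tendsto (fun r => deriv b r / r) (nhdsWithin 0 (Ioi 0)) (nhds L)) := by
  -- b agrees with B on Ioi 0
  have hbB : ∀ r ∈ Ioi (0:ℝ), b r = (1 / Real.sinh r ^ 2) * Ffun r := by
    intro r hr
    rw [hb r hr, int_eq φ hφ hr]
  -- Part 1
  have part1 : ∀ r ∈ Ioi (0 : ℝ),
      HasDerivAt b (φ r - (2 * Real.cosh r / Real.sinh r) * b r) r := by
    intro r hr
    rw [mem_Ioi] at hr
    have hs : Real.sinh r ≠ 0 := Real.sinh_ne_zero.2 hr.ne'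
    have hc : HasDerivAt (fun u => Real.sinh u ^ 2)
        ((2:ℕ) * Real.sinh r ^ (2-1) * Real.cosh r) r := (Real.hasDerivAt_sinh r).pow 2
    have hinv : HasDerivAt (fun u => 1 / Real.sinh u ^ 2)
        ((0 * Real.sinh r ^2 - 1 * ((2:ℕ) * Real.sinh r ^ (2-1) * Real.cosh r)) /
          (Real.sinh r ^2)^2) r :=
      (hasDerivAt_const r (1:ℝ)).div hc (pow_ne_zero 2 hs)
    have hB := hinv.mul (Ffun_hasDeriv hr)
    have heq : (fun u => 1 / Real.sinh u ^ 2 * Ffun u) =ᶠ[nhds r] b := by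
      filter_upwards [isOpen_Ioi.mem_nhds (mem_Ioi.2 hr)] with u hu
      exact (hbB u hu).symm
    have hB' := hB.congr_of_eventuallyEq heq.symm
    convert hB' using 1
    · rfl
    · rfl
    rw [hbB r (mem_Ioi.2 hr), hfun_phi φ hφ hr]
    field_simp
    ring
  refine ⟨part1, ?_, ?_⟩
  · -- Part 2
    have hder2 : ∀ r : ℝ, 0 < r → r < 1 →
        deriv b r = 1/r - 2*Real.cosh r * Ffun r / Real.sinh r^3 := by
      intro r hr0 hr1
      rw [(part1 r (mem_Ioi.2 hr0)).deriv, hφ r hr0, if_pos hr1, hbB r (mem_Ioi.2 hr0)]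
      have hs : Real.sinh r ≠ 0 := Real.sinh_ne_zero.2 hr0.ne'
      field_simp
    refine ⟨3, by norm_num, ?_⟩
    rintro r ⟨hr0, hr1⟩
    have hSpos : 0 < Real.sinh r := Real.sinh_pos_iff.2 hr0
    have hS := sinh_ge_cubic hr0.le
    have ha : (0:ℝ) ≤ r + r^3/6 := by positivity
    have h3 : (r + r^3/6)^3 ≤ Real.sinh r^3 := pow_le_pow_left₀ ha hS 3
    have hS3 : r^3 + r^5/2 ≤ Real.sinh r^3 := by
      nlinarith [pow_nonneg hr0.le 7, pow_nonneg hr0.le 9]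
    have hF0 : 0 ≤ Ffun r := Ffun_nonneg hr0
    have hF := Ffun_ub hr0 hr1
    have hC := cosh_le_one_add_sq hr0.le hr1
    have hCpos := Real.cosh_pos r
    rcases lt_or_eq_of_le hr1 with h1 | h1
    · rw [hder2 r hr0 h1]
      have key : 2*Real.cosh r*Ffun r/Real.sinh r^3 ≤ 1/r + 3*r := by
        rw [div_le_iff₀ (pow_pos hSpos 3)]
        have e1 : Real.cosh r * Ffun r ≤ (1+r^2)*(r^2/2+r^4/12+r^6/6) :=
          mul_le_mul hC hF hF0 (by positivity)
        have e2 : (1/r + 3*r) * (r^3 + r^5/2) ≤ (1/r + 3*r) * Real.sinh r^3 :=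
          mul_le_mul_of_nonneg_left hS3 (by positivity)
        have e3 : (1/r + 3*r) * (r^3 + r^5/2) = r^2 + 7*r^4/2 + 3*r^6/2 := by
          field_simp; ring
        have e4 : r^8 ≤ r^6 := pow_le_pow_of_le_one hr0.le hr1 (by norm_num)
        have e5 : r^6 ≤ r^4 := pow_le_pow_of_le_one hr0.le hr1 (by norm_num)
        nlinarith [e1, e2, e3, e4, e5]
      linarith
    · subst h1
      rw [(part1 1 (mem_Ioi.2 one_pos)).deriv, hφ 1 one_pos, if_neg (lt_irrefl 1),
        hbB 1 (mem_Ioi.2 one_pos)]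
      have hs : Real.sinh 1 ≠ 0 := ne_of_gt hSpos
      have hS1 : (7:ℝ)/6 ≤ Real.sinh 1 := by
        have := sinh_ge_cubic (by norm_num : (0:ℝ) ≤ 1); norm_num at this; linarith
      have hC1 : Real.cosh 1 ≤ 2 := cosh_le_two (by norm_num) (by norm_num)
      have hF1 : Ffun 1 ≤ 3/4 := by
        have := Ffun_ub one_pos (le_refl 1); norm_num at this; linarith
      have hF10 : 0 ≤ Ffun 1 := Ffun_nonneg one_pos
      have hcube : (7/6:ℝ)^3 ≤ Real.sinh 1^3 := pow_le_pow_left₀ (by norm_num) hS1 3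
      have key : 2 * Real.cosh 1 / Real.sinh 1 * (1 / Real.sinh 1 ^ 2 * Ffun 1) ≤ 4 := by
        have e : 2 * Real.cosh 1 / Real.sinh 1 * (1 / Real.sinh 1^2 * Ffun 1)
            = 2*Real.cosh 1*Ffun 1/Real.sinh 1^3 := by
          field_simp
        rw [e, div_le_iff₀ (pow_pos hSpos 3)]
        nlinarith [mul_le_mul hC1 hF1 hF10 (by norm_num : (0:ℝ) ≤ 2)]
      linarith
  · -- Part 3
    refine ⟨-(1/6), by norm_num, ?_⟩
    have hder2 : ∀ r : ℝ, 0 < r → r < 1 →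
        deriv b r = 1/r - 2*Real.cosh r * Ffun r / Real.sinh r^3 := by
      intro r hr0 hr1
      rw [(part1 r (mem_Ioi.2 hr0)).deriv, hφ r hr0, if_pos hr1, hbB r (mem_Ioi.2 hr0)]
      have hs : Real.sinh r ≠ 0 := Real.sinh_ne_zero.2 hr0.ne'
      field_simp
    refine tendsto_of_tendsto_of_tendsto_of_le_of_le' Alo_tendsto Aup_tendsto ?_ ?_
    · filter_upwards [Ioo_mem_nhdsGT_of_mem (show (0:ℝ) ∈ Ico 0 1 from ⟨le_refl _, one_pos⟩)]
        with r hr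
      obtain ⟨hr0, hr1⟩ := hr
      have hSpos : 0 < Real.sinh r := Real.sinh_pos_iff.2 hr0
      have hdd : deriv b r / r = 1/r^2 - 2*Real.cosh r * Ffun r/(r * Real.sinh r^3) := by
        rw [hder2 r hr0 hr1]
        field_simp
      rw [hdd, Alo]
      have hF := Ffun_ub hr0 hr1.le
      gcongr
    · filter_upwards [Ioo_mem_nhdsGT_of_mem (show (0:ℝ) ∈ Ico 0 1 from ⟨le_refl _, one_pos⟩)]
        with r hr
      obtain ⟨hr0, hr1⟩ := hr
      have hSpos : 0 < Real.sinh r := Real.sinh_pos_iff.2 hr0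
      have hdd : deriv b r / r = 1/r^2 - 2*Real.cosh r * Ffun r/(r * Real.sinh r^3) := by
        rw [hder2 r hr0 hr1]
        field_simp
      rw [hdd, Aup]
      have hF := Ffun_lb hr0 hr1.le
      gcongr
end
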